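/- arXiv:1601.04856 — 2 statements merged into one kernel-verified Lean document; each statement's English description precedes it below -/
import Mathlib

section
/- If the hypergraph H is a disjoint union of complete k-uniform hypergraphs (for some k ≥ 1), then τ(H) = τ_g(H) = τ_g'(H). -/
variable {V : Type} [Fintype V] [DecidableEq V]

/-- The set of legal moves in the transversal game with uncovered edge set `E`:
the vertices hitting at least one uncovered edge. -/
def playable (E : Finset (Finset V)) : Finset V :=
  Finset.univ.filter (fun v => ∃ e ∈ E, v ∈ e)

/-- The number of moves remaining in the transversal game with uncovered edge set `E`
under optimal play, where `ehTurn = true` iff Edge-hitter (the minimizer) moves next;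
Staller (the maximizer) moves next iff `ehTurn = false`.  Each move must hit at least
one uncovered edge, and the game ends when no uncovered edge remains. -/
def gameVal (ehTurn : Bool) (E : Finset (Finset V)) : ℕ :=
  if h : (playable E).Nonempty then
    1 +
      (if ehTurn then
        (playable E).attach.inf' (Finset.attach_nonempty_iff.mpr h)
          (fun v => gameVal (!ehTurn) (E.filter (fun e => v.1 ∉ e)))
      else
        (playable E).attach.sup' (Finset.attach_nonempty_iff.mpr h)
          (fun v => gameVal (!ehTurn) (E.filter (fun e => v.1 ∉ e))))
  else 0
termination_by E.card
decreasing_by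
  all_goals
    obtain ⟨v, hv⟩ := v
    simp only [playable, Finset.mem_filter, Finset.mem_univ, true_and] at hv
    obtain ⟨e, he, hve⟩ := hv
    exact Finset.card_lt_card (Finset.filter_ssubset.mpr ⟨e, he, by simp [hve]⟩)

/-- The game transversal number `τ_g`: Edge-hitter makes the first move. -/
def gameTransversalNum (E : Finset (Finset V)) : ℕ := gameVal true E

/-- The Staller-start game transversal number `τ_g'`: Staller makes the first move. -/
def stallerGameTransversalNum (E : Finset (Finset V)) : ℕ := gameVal false E

/-- The transversal number `τ`: the minimum size of a set of vertices meeting all edges. -/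
noncomputable def transversalNum (E : Finset (Finset V)) : ℕ :=
  sInf {n | ∃ T : Finset V, (∀ e ∈ E, ∃ v ∈ T, v ∈ e) ∧ T.card = n}

/-!
Every legal move lies in some part `p` in which at least `k` vertices are still unchosen, and it
decreases `∑ p, (#(p \ D) - (k - 1))` by exactly one, where `D` is the set of chosen vertices;
when no legal move remains, this potential is `0`. So every play, however either player moves,
lasts exactly `∑ p, (#p - (k - 1))` moves. Since any play ends in a transversal, this is at
least `τ`; conversely a transversal misses at most `k - 1` vertices of each part, so it has at
least that many vertices.
-/

open Finset

def IsTransversal {α : Type*} (E : Finset (Finset α)) (T : Finset α) : Prop :=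
  ∀ e ∈ E, ∃ v ∈ T, v ∈ e

lemma mem_playable {E : Finset (Finset V)} {v : V} : v ∈ playable E ↔ ∃ e ∈ E, v ∈ e := by
  simp [playable]

lemma card_filter_notMem_lt_of_mem_playable {E : Finset (Finset V)} {v : V}
    (hv : v ∈ playable E) : (E.filter (v ∉ ·)).card < E.card := by
  obtain ⟨e, he, hve⟩ := mem_playable.mp hv
  exact card_lt_card (filter_ssubset.mpr ⟨e, he, not_not.mpr hve⟩)

lemma transversalNum_le_card {α : Type} {E : Finset (Finset α)} {T : Finset α}
    (hT : IsTransversal E T) : transversalNum E ≤ T.card :=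
  Nat.sInf_le ⟨T, hT, rfl⟩

lemma exists_isTransversal_card_eq_transversalNum {α : Type} {E : Finset (Finset α)}
    (h : ∃ T, IsTransversal E T) : ∃ T, IsTransversal E T ∧ T.card = transversalNum E := by
  obtain ⟨T, hT⟩ := h
  have hne : {n | ∃ T : Finset α, IsTransversal E T ∧ T.card = n}.Nonempty := ⟨_, T, hT, rfl⟩
  exact Nat.sInf_mem hne

lemma exists_mem_playable_add_gameVal_filter_le (b : Bool) {E : Finset (Finset V)}
    (h : (playable E).Nonempty) :
    ∃ v ∈ playable E, 1 + gameVal (!b) (E.filter (v ∉ ·)) ≤ gameVal b E := by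
  rw [gameVal, dif_pos h]
  cases b
  · obtain ⟨v, hv⟩ := h
    refine ⟨v, hv, Nat.add_le_add_left ?_ 1⟩
    exact le_sup' (fun w : playable E => gameVal true (E.filter (w.1 ∉ ·))) (mem_attach _ ⟨v, hv⟩)
  · obtain ⟨⟨v, hv⟩, -, hmin⟩ := exists_mem_eq_inf' (attach_nonempty_iff.mpr h)
      (fun w : playable E => gameVal false (E.filter (w.1 ∉ ·)))
    exact ⟨v, hv, (congrArg (1 + ·) hmin).ge⟩

lemma exists_isTransversal_card_le_gameVal (b : Bool) {E : Finset (Finset V)} (hE : ∅ ∉ E) :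
    ∃ T, IsTransversal E T ∧ T.card ≤ gameVal b E := by
  induction hn : E.card using Nat.strong_induction_on generalizing E b with
  | _ n ih =>
  by_cases h : (playable E).Nonempty
  · obtain ⟨v, hv, hval⟩ := exists_mem_playable_add_gameVal_filter_le b h
    obtain ⟨T, hT, hcard⟩ := ih _ (hn ▸ card_filter_notMem_lt_of_mem_playable hv) (!b)
      (fun h' => hE (mem_filter.mp h').1) rfl
    refine ⟨insert v T, fun e he => ?_, by grind [card_insert_le]⟩
    by_cases hve : v ∈ e
    · exact ⟨v, mem_insert_self v T, hve⟩
    · obtain ⟨w, hw, hwe⟩ := hT e (mem_filter.mpr ⟨he, hve⟩)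
      exact ⟨w, mem_insert_of_mem hw, hwe⟩
  · have hE_empty : E = ∅ := eq_empty_of_forall_notMem fun e he => by
      obtain ⟨v, hv⟩ := nonempty_iff_ne_empty.mpr (ne_of_mem_of_not_mem he hE)
      exact h ⟨v, mem_playable.mpr ⟨e, he, hv⟩⟩
    exact ⟨∅, by simp [hE_empty, IsTransversal], by simp⟩

lemma gameVal_eq_of_potential {σ : Type*} (edges : σ → Finset (Finset V))
    (move : σ → V → σ) (f : σ → ℕ)
    (hmove : ∀ s v, edges (move s v) = (edges s).filter (v ∉ ·))
    (hstep : ∀ s, ∀ v ∈ playable (edges s), f (move s v) + 1 = f s)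
    (hend : ∀ s, ¬ (playable (edges s)).Nonempty → f s = 0) (b : Bool) (s : σ) :
    gameVal b (edges s) = f s := by
  induction hn : (edges s).card using Nat.strong_induction_on generalizing s b with
  | _ n ih =>
  by_cases h : (playable (edges s)).Nonempty
  · have hnext : ∀ w : playable (edges s), gameVal (!b) ((edges s).filter (w.1 ∉ ·)) = f s - 1 :=
      fun ⟨w, hw⟩ => by
        change gameVal (!b) ((edges s).filter (w ∉ ·)) = f s - 1
        have hlt : (edges (move s w)).card < n := by
          rw [hmove, ← hn]
          exact card_filter_notMem_lt_of_mem_playable hw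
        have hval := ih _ hlt (!b) (move s w) rfl
        rw [hmove] at hval
        have := hstep s w hw
        omega
    obtain ⟨v, hv⟩ := h
    have := hstep s v hv
    rw [gameVal, dif_pos ⟨v, hv⟩]
    simp only [hnext, inf'_const, sup'_const, ite_self]
    omega
  · rw [gameVal, dif_neg h, hend s h]

lemma filter_disjoint_insert {α : Type*} [DecidableEq α] (E : Finset (Finset α))
    (D : Finset α) (v : α) :
    E.filter (Disjoint · (insert v D)) = (E.filter (Disjoint · D)).filter (v ∉ ·) := by
  rw [filter_filter]
  exact filter_congr fun e _ => by rw [disjoint_insert_right, and_comm]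

lemma Finpartition.sum_card_sdiff_insert_sub_add_one {α : Type*} [DecidableEq α] {s : Finset α}
    (P : Finpartition s) {k : ℕ} {p₀ D : Finset α} {v : α} (hp₀ : p₀ ∈ P.parts)
    (hv : v ∈ p₀ \ D) (hk : k ≤ (p₀ \ D).card) :
    ∑ p ∈ P.parts, ((p \ insert v D).card - (k - 1)) + 1 =
      ∑ p ∈ P.parts, ((p \ D).card - (k - 1)) := by
  have hother : ∀ p ∈ P.parts.erase p₀, p \ insert v D = p \ D := fun p hp => by
    have hvp : v ∉ p := disjoint_right.mp
      (P.disjoint (mem_of_mem_erase hp) hp₀ (ne_of_mem_erase hp)) (mem_sdiff.mp hv).1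
    rw [sdiff_insert, erase_eq_of_notMem fun h => hvp (mem_sdiff.mp h).1]
  rw [← sum_erase_add _ _ hp₀, ← sum_erase_add _ _ hp₀, sum_congr rfl fun p hp => by
    rw [hother p hp], sdiff_insert, card_erase_of_mem hv]
  have := card_pos.mpr ⟨v, hv⟩
  omega

lemma Finpartition.sum_card_inter {α : Type*} [DecidableEq α] {s : Finset α}
    (P : Finpartition s) {S : Finset α} (hS : S ⊆ s) :
    ∑ p ∈ P.parts, (p ∩ S).card = S.card := by
  rw [← (P.restrict hS).sum_card_parts, P.sum_restrict hS card card_empty]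
  rfl

section CompleteUniformUnion

variable {k : ℕ} {P : Finpartition (univ : Finset V)} {E : Finset (Finset V)}

lemma mem_playable_filter_disjoint_iff (hk : 1 ≤ k)
    (hE : ∀ e : Finset V, e ∈ E ↔ e.card = k ∧ ∃ p ∈ P.parts, e ⊆ p) {D : Finset V} {v : V} :
    v ∈ playable (E.filter (Disjoint · D)) ↔ ∃ p ∈ P.parts, v ∈ p \ D ∧ k ≤ (p \ D).card := by
  rw [mem_playable]
  constructor
  · rintro ⟨e, he, hve⟩
    obtain ⟨heE, hdisj⟩ := mem_filter.mp he
    obtain ⟨hcard, p, hp, hep⟩ := (hE e).mp heE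
    have hsub : e ⊆ p \ D := fun x hx => mem_sdiff.mpr ⟨hep hx, disjoint_left.mp hdisj hx⟩
    exact ⟨p, hp, hsub hve, hcard ▸ card_le_card hsub⟩
  · rintro ⟨p, hp, hv, hcard⟩
    obtain ⟨e, hve, hsub, he⟩ :=
      exists_subsuperset_card_eq (singleton_subset_iff.mpr hv) (by simpa using hk) hcard
    refine ⟨e, mem_filter.mpr ⟨(hE e).mpr ⟨he, p, hp, hsub.trans sdiff_subset⟩, ?_⟩,
      singleton_subset_iff.mp hve⟩
    exact disjoint_left.mpr fun x hx => (mem_sdiff.mp (hsub hx)).2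

lemma gameVal_filter_disjoint (hk : 1 ≤ k)
    (hE : ∀ e : Finset V, e ∈ E ↔ e.card = k ∧ ∃ p ∈ P.parts, e ⊆ p) (b : Bool) (D : Finset V) :
    gameVal b (E.filter (Disjoint · D)) = ∑ p ∈ P.parts, ((p \ D).card - (k - 1)) := by
  refine gameVal_eq_of_potential (fun D => E.filter (Disjoint · D)) (fun D v => insert v D)
    (fun D => ∑ p ∈ P.parts, ((p \ D).card - (k - 1))) (filter_disjoint_insert E)
    ?_ ?_ b D
  · intro D v hv
    obtain ⟨p, hp, hvp, hcard⟩ := (mem_playable_filter_disjoint_iff hk hE).mp hv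
    exact P.sum_card_sdiff_insert_sub_add_one hp hvp hcard
  · intro D hD
    refine sum_eq_zero fun p hp => Nat.sub_eq_zero_of_le (not_lt.mp fun hcard => ?_)
    obtain ⟨v, hv⟩ := card_pos.mp (by omega : 0 < (p \ D).card)
    exact hD ⟨v, (mem_playable_filter_disjoint_iff hk hE).mpr ⟨p, hp, hv, by omega⟩⟩

lemma card_sdiff_le_of_isTransversal
    (hE : ∀ e : Finset V, e ∈ E ↔ e.card = k ∧ ∃ p ∈ P.parts, e ⊆ p) {S : Finset V}
    (hS : IsTransversal E S) {p : Finset V} (hp : p ∈ P.parts) : (p \ S).card ≤ k - 1 := by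
  by_contra! hcard
  obtain ⟨e, hsub, he⟩ := exists_subset_card_eq (show k ≤ (p \ S).card by omega)
  obtain ⟨v, hvS, hve⟩ := hS e ((hE e).mpr ⟨he, p, hp, hsub.trans sdiff_subset⟩)
  exact (mem_sdiff.mp (hsub hve)).2 hvS

lemma sum_card_sub_le_card_of_isTransversal
    (hE : ∀ e : Finset V, e ∈ E ↔ e.card = k ∧ ∃ p ∈ P.parts, e ⊆ p) {S : Finset V}
    (hS : IsTransversal E S) : ∑ p ∈ P.parts, (p.card - (k - 1)) ≤ S.card :=
  calc ∑ p ∈ P.parts, (p.card - (k - 1))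
      ≤ ∑ p ∈ P.parts, (p ∩ S).card := sum_le_sum fun p hp => by
        have := card_sdiff_le_of_isTransversal hE hS hp
        have := card_inter_add_card_sdiff p S
        omega
    _ = S.card := P.sum_card_inter (subset_univ S)

end CompleteUniformUnion

theorem tau_eq_gameTau_of_disjoint_union_complete_uniform_general
    {V : Type} [Fintype V] [DecidableEq V]
    (k : ℕ) (hk : 1 ≤ k)
    (P : Finpartition (Finset.univ : Finset V))
    (E : Finset (Finset V))
    (hE : ∀ e : Finset V, e ∈ E ↔ e.card = k ∧ ∃ p ∈ P.parts, e ⊆ p) :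
    transversalNum E = gameTransversalNum E ∧
      transversalNum E = stallerGameTransversalNum E := by
  have hgame (b : Bool) : gameVal b E = ∑ p ∈ P.parts, (p.card - (k - 1)) := by
    simpa using gameVal_filter_disjoint hk hE b ∅
  have hE_empty : ∅ ∉ E := fun h => by
    have := ((hE ∅).mp h).1
    simp only [card_empty] at this
    omega
  obtain ⟨T, hT, hT_card⟩ := exists_isTransversal_card_le_gameVal true hE_empty
  obtain ⟨S, hS, hS_card⟩ := exists_isTransversal_card_eq_transversalNum ⟨T, hT⟩
  have hτ : transversalNum E = ∑ p ∈ P.parts, (p.card - (k - 1)) :=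
    le_antisymm ((transversalNum_le_card hT).trans (hgame true ▸ hT_card))
      (hS_card ▸ sum_card_sub_le_card_of_isTransversal hE hS)
  exact ⟨by rw [hτ, gameTransversalNum, hgame], by rw [hτ, stallerGameTransversalNum, hgame]⟩

/-- If `H` is a disjoint union of complete `k`-uniform hypergraphs (the vertex set is
partitioned into parts of size at least `k`, and the edges are exactly all `k`-element
subsets lying inside a single part), then `τ(H) = τ_g(H) = τ_g'(H)`. -/
theorem tau_eq_gameTau_of_disjoint_union_complete_uniform
    {V : Type} [Fintype V] [DecidableEq V]
    (k : ℕ) (hk : 1 ≤ k)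
    (P : Finpartition (Finset.univ : Finset V))
    (hparts : ∀ p ∈ P.parts, k ≤ p.card)
    (E : Finset (Finset V))
    (hE : ∀ e : Finset V, e ∈ E ↔ e.card = k ∧ ∃ p ∈ P.parts, e ⊆ p) :
    transversalNum E = gameTransversalNum E ∧
      transversalNum E = stallerGameTransversalNum E :=
  tau_eq_gameTau_of_disjoint_union_complete_uniform_general k hk P E hE
end

section
/- If H is a 3-uniform hypergraph, then 48 τ_g(H) ≤ 15 n_{≥3}(H) + 14 n_2(H) + 11 n_1(H) + 15 m(H), where n_{≥3}(H), n_2(H), n_1(H) denote the number of vertices of H of degree at least 3, of degree exactly 2, and of degree exactly 1, respectively. -/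
variable {V : Type} [Fintype V] [DecidableEq V]

/-!
Give a vertex of degree `d` the weight `ω d` (`11, 14, 15` for `d = 1, 2, ≥ 3`) and put
`w(H) = 15 m + ∑ ω (deg v)`, so that the claim reads `48 τ_g ≤ w`. Choosing `v` removes the
`deg v` edges through `v`, hence lowers `w` by `15 deg v + ω (deg v)` plus the losses of the
vertices sharing edges with `v`. It suffices that Edge-hitter can always open a round (his move
and Staller's reply) that lowers `w` by `96`. If some degree is at least `4`, any such vertex
does (`75 + 26`). If the maximum degree is `3`, either some opening is worth `68` and every
reply `28`, or a vertex of degree `3` is worth `66` and every reply `30`.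

If all degrees are at most `2`, a separate induction shows `6 τ_g + n₂ ≤ 6 m` together with
`6 τ_g' + n₂ ≤ 6 m + 2` for the Staller-start game, and `33 m = ∑ 11 deg v ≤ ∑ ω (deg v) + 8 n₂`
turns this into `48 τ_g ≤ w`.
-/
namespace TransversalGame

open Finset

section Hypergraph

variable {α : Type} [DecidableEq α]

def residual (E : Finset (Finset α)) (v : α) : Finset (Finset α) := E.filter (v ∉ ·)

def degree (E : Finset (Finset α)) (v : α) : ℕ := #(E.filter (v ∈ ·))

def codegree (E : Finset (Finset α)) (u v : α) : ℕ := degree (E.filter (v ∈ ·)) u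

def closedNbhd (E : Finset (Finset α)) (v : α) : Finset α := (E.filter (v ∈ ·)).biUnion id

variable {E : Finset (Finset α)} {f : Finset α} {u v : α} {k : ℕ}

lemma residual_subset (E : Finset (Finset α)) (v : α) : residual E v ⊆ E := filter_subset _ _

lemma uniform_residual (hk : ∀ e ∈ E, #e = k) (v : α) : ∀ e ∈ residual E v, #e = k :=
  fun e he => hk e (residual_subset E v he)

lemma card_residual_add_degree (E : Finset (Finset α)) (v : α) :
    #(residual E v) + degree E v = #E := by
  rw [add_comm]
  exact card_filter_add_card_filter_not _

lemma degree_residual_add_codegree (E : Finset (Finset α)) (u v : α) :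
    degree (residual E v) u + codegree E u v = degree E u := by
  rw [degree, degree, codegree, degree, residual, filter_comm, filter_comm (p := (v ∈ ·)),
    add_comm]
  exact card_filter_add_card_filter_not _

lemma degree_residual_le (E : Finset (Finset α)) (u v : α) :
    degree (residual E v) u ≤ degree E u :=
  card_le_card (filter_subset_filter _ (residual_subset E v))

lemma degree_residual_self (E : Finset (Finset α)) (v : α) : degree (residual E v) v = 0 := by
  simp [degree, residual]

lemma codegree_self (E : Finset (Finset α)) (v : α) : codegree E v v = degree E v := by
  rw [codegree, degree, degree, filter_filter]
  simp

lemma codegree_pos (hf : f ∈ E) (hu : u ∈ f) (hv : v ∈ f) : 0 < codegree E u v :=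
  card_pos.mpr ⟨f, mem_filter.mpr ⟨mem_filter.mpr ⟨hf, hv⟩, hu⟩⟩

lemma subset_closedNbhd (hf : f ∈ E) (hv : v ∈ f) : f ⊆ closedNbhd E v :=
  subset_biUnion_of_mem id (mem_filter.mpr ⟨hf, hv⟩)

lemma codegree_eq_zero_of_notMem_closedNbhd (h : u ∉ closedNbhd E v) : codegree E u v = 0 := by
  refine card_eq_zero.mpr (filter_eq_empty_iff.mpr fun f hf hu => h ?_)
  rw [mem_filter] at hf
  exact subset_closedNbhd hf.1 hf.2 hu

lemma sum_degree_eq_sum_card_inter (E : Finset (Finset α)) (A : Finset α) :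
    ∑ x ∈ A, degree E x = ∑ e ∈ E, #(A ∩ e) := by
  simp_rw [degree, ← filter_mem_eq_inter, card_eq_sum_ones, sum_filter]
  exact sum_comm

lemma card_filter_closedNbhd_le_of_degree_eq_one (hk : ∀ e ∈ E, #e = k) (hu : degree E u = 1)
    (p : α → Prop) [DecidablePred p] (hpu : ¬ p u) : #{x ∈ closedNbhd E u | p x} ≤ k - 1 := by
  obtain ⟨f, hf⟩ := card_eq_one.mp hu
  obtain ⟨hfE, huf⟩ := mem_filter.mp (hf ▸ mem_singleton_self f)
  rw [closedNbhd, hf, singleton_biUnion, id, ← hk f hfE, ← card_erase_of_mem huf]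
  exact card_le_card fun x hx => mem_erase.mpr
    ⟨fun hxu => hpu (hxu ▸ (mem_filter.mp hx).2), (mem_filter.mp hx).1⟩

lemma card_closedNbhd_le_of_degree_eq_two (hk : ∀ e ∈ E, #e = k) (hu : degree E u = 2) :
    #(closedNbhd E u) + 1 ≤ 2 * k := by
  obtain ⟨f, g, -, hfg⟩ := card_eq_two.mp hu
  obtain ⟨hfE, huf⟩ := mem_filter.mp (hfg ▸ mem_insert_self f {g})
  obtain ⟨hgE, hug⟩ := mem_filter.mp (hfg ▸ mem_insert_of_mem (mem_singleton_self g))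
  have hinter : 0 < #(f ∩ g) := card_pos.mpr ⟨u, mem_inter.mpr ⟨huf, hug⟩⟩
  have := card_union_add_card_inter f g
  rw [closedNbhd, hfg, biUnion_insert, singleton_biUnion, id, id]
  rw [hk f hfE, hk g hgE] at this
  omega

end Hypergraph

section Game

variable {E : Finset (Finset V)} {v : V}

lemma mem_playable_iff : v ∈ playable E ↔ 0 < degree E v := by
  simp [playable, degree, card_pos, Finset.Nonempty]

lemma residual_ssubset (hv : v ∈ playable E) : residual E v ⊂ E := by
  obtain ⟨e, he, hve⟩ := by simpa [playable] using hv
  exact filter_ssubset.mpr ⟨e, he, not_not.mpr hve⟩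

lemma playable_nonempty (hE : ∀ e ∈ E, e.Nonempty) (hne : E.Nonempty) : (playable E).Nonempty := by
  obtain ⟨e, he⟩ := hne
  obtain ⟨v, hv⟩ := hE e he
  exact ⟨v, by simpa [playable] using ⟨e, he, hv⟩⟩

lemma gameVal_eq_zero (h : ¬ (playable E).Nonempty) (b : Bool) : gameVal b E = 0 := by
  rw [gameVal, dif_neg h]

lemma gameVal_true_le (hv : v ∈ playable E) :
    gameVal true E ≤ 1 + gameVal false (residual E v) := by
  rw [gameVal, dif_pos ⟨v, hv⟩, if_pos rfl]
  exact Nat.add_le_add_left (inf'_le (fun u : playable E => gameVal false (residual E u))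
    (mem_attach _ ⟨v, hv⟩)) 1

lemma exists_gameVal_false_eq (h : (playable E).Nonempty) :
    ∃ u ∈ playable E, gameVal false E = 1 + gameVal true (residual E u) := by
  rw [gameVal, dif_pos h, if_neg Bool.false_ne_true]
  obtain ⟨u, -, hu⟩ := exists_mem_eq_sup' (attach_nonempty_iff.mpr h)
    (fun u : playable E => gameVal true (residual E u))
  exact ⟨u, u.2, by rw [← hu]; rfl⟩

lemma mul_gameVal_true_le_of_forall_reply (hv : v ∈ playable E) {c W : ℕ} (hc : c ≤ W)
    (h : ∀ u ∈ playable (residual E v),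
      c * gameVal true (residual (residual E v) u) + 2 * c ≤ W) :
    c * gameVal true E ≤ W := by
  have hmove := gameVal_true_le hv
  by_cases hne : (playable (residual E v)).Nonempty
  · obtain ⟨u, hu, hreply⟩ := exists_gameVal_false_eq hne
    calc c * gameVal true E ≤ c * (1 + (1 + gameVal true (residual (residual E v) u))) :=
          Nat.mul_le_mul_left c (hreply ▸ hmove)
      _ = c * gameVal true (residual (residual E v) u) + 2 * c := by ring
      _ ≤ W := h u hu
  · rw [gameVal_eq_zero hne] at hmove
    calc c * gameVal true E ≤ c * 1 := Nat.mul_le_mul_left c hmove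
      _ ≤ W := by rwa [mul_one]

end Game

lemma sum_ite_eq_mul_card {β : Type*} [Fintype β] (p : β → Prop) [DecidablePred p] (c : ℕ) :
    ∑ x, (if p x then c else 0) = c * #{x | p x} := by
  rw [← sum_filter, sum_const, smul_eq_mul, mul_comm]

section Weight

variable {E : Finset (Finset V)} {v : V}

def vertexWeight (d : ℕ) : ℕ := if 3 ≤ d then 15 else if d = 2 then 14 else if d = 1 then 11 else 0

def weight (E : Finset (Finset V)) : ℕ := 15 * #E + ∑ v, vertexWeight (degree E v)

def numDegreeTwo (E : Finset (Finset V)) : ℕ := #{v | degree E v = 2}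

lemma vertexWeight_mono : Monotone vertexWeight := by
  intro a b h
  unfold vertexWeight
  split_ifs <;> omega

lemma vertexWeight_sub_add_le {c d : ℕ} (hd : d ≤ 3) (hcd : c ≤ d) :
    vertexWeight (d - c) + c ≤ vertexWeight d := by
  unfold vertexWeight
  split_ifs <;> omega

lemma vertexWeight_sub_add_two_le {c d : ℕ} (hd : d ≤ 3) (hc : 0 < c) (hcd : c ≤ d)
    (h : d ≤ 2 ∨ 2 ≤ c) : vertexWeight (d - c) + (c + 2) ≤ vertexWeight d := by
  unfold vertexWeight
  split_ifs <;> omega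

lemma weight_eq (E : Finset (Finset V)) :
    weight E = 15 * #{v | 3 ≤ degree E v} + 14 * #{v | degree E v = 2}
      + 11 * #{v | degree E v = 1} + 15 * #E := by
  have hsplit : ∀ d, vertexWeight d =
      (if 3 ≤ d then 15 else 0) + (if d = 2 then 14 else 0) + (if d = 1 then 11 else 0) := by
    intro d
    unfold vertexWeight
    split_ifs <;> omega
  simp only [weight, hsplit, sum_add_distrib, sum_ite_eq_mul_card]
  ring

lemma sum_degree_of_uniform {k : ℕ} (hk : ∀ e ∈ E, #e = k) : ∑ x, degree E x = k * #E := by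
  rw [sum_degree_eq_sum_card_inter, sum_congr rfl fun e he => by rw [univ_inter, hk e he],
    sum_const, smul_eq_mul, mul_comm]

lemma sum_codegree_of_uniform {k : ℕ} (hk : ∀ e ∈ E, #e = k) (v : V) :
    ∑ x, codegree E x v = k * degree E v :=
  sum_degree_of_uniform fun e he => hk e (mem_filter.mp he).1

lemma weight_residual_add_sum_le (δ : V → ℕ)
    (hδ : ∀ x ≠ v, vertexWeight (degree (residual E v) x) + δ x ≤ vertexWeight (degree E x)) :
    weight (residual E v) + 15 * degree E v + vertexWeight (degree E v)
      + ∑ x ∈ univ.erase v, δ x ≤ weight E := by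
  have hcard := card_residual_add_degree E v
  have hsum : ∑ x ∈ univ.erase v, (vertexWeight (degree (residual E v) x) + δ x)
      ≤ ∑ x ∈ univ.erase v, vertexWeight (degree E x) :=
    sum_le_sum fun x hx => hδ x (ne_of_mem_erase hx)
  rw [sum_add_distrib] at hsum
  unfold weight
  rw [← add_sum_erase _ _ (mem_univ v), ← add_sum_erase _ _ (mem_univ v),
    degree_residual_self, show vertexWeight 0 = 0 from rfl]
  omega

lemma weight_residual_add_le (E : Finset (Finset V)) (v : V) :
    weight (residual E v) + 15 * degree E v + vertexWeight (degree E v) ≤ weight E := by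
  simpa using weight_residual_add_sum_le (E := E) (v := v) 0
    fun x _ => vertexWeight_mono (degree_residual_le E x v)

/-- With all degrees at most `3`, a vertex losing `c` of its edges loses at least `c` of weight,
and the losses of the vertices sharing edges with `v` add up to `2 * degree E v`. A vertex of
`B` loses `2` more. -/
lemma weight_residual_add_le_of_degree_le_three (h3 : ∀ e ∈ E, #e = 3)
    (hmax : ∀ x, degree E x ≤ 3) (B : Finset V)
    (hB : ∀ u ∈ B, u ≠ v ∧ 0 < codegree E u v ∧ (degree E u ≤ 2 ∨ 2 ≤ codegree E u v)) :
    weight (residual E v) + 17 * degree E v + vertexWeight (degree E v) + 2 * #B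
      ≤ weight E := by
  have hdrop := weight_residual_add_sum_le (E := E) (v := v)
    (fun x => codegree E x v + if x ∈ B then 2 else 0) fun x _ => by
      have hx := degree_residual_add_codegree E x v
      rw [show degree (residual E v) x = degree E x - codegree E x v by omega]
      split_ifs with hxB
      · obtain ⟨-, hpos, hbonus⟩ := hB x hxB
        exact vertexWeight_sub_add_two_le (hmax x) hpos (by omega) hbonus
      · exact vertexWeight_sub_add_le (hmax x) (by omega)
  have hco : ∑ x ∈ univ.erase v, codegree E x v = 2 * degree E v := by
    have := add_sum_erase _ (fun x => codegree E x v) (mem_univ v)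
    rw [sum_codegree_of_uniform h3, codegree_self] at this
    omega
  have hbonus : ∑ x ∈ univ.erase v, (if x ∈ B then 2 else 0) = 2 * #B := by
    rw [sum_ite_mem, sum_const, smul_eq_mul, mul_comm,
      inter_eq_right.mpr fun u hu => mem_erase.mpr ⟨(hB u hu).1, mem_univ u⟩]
  rw [sum_add_distrib, hco, hbonus] at hdrop
  omega

end Weight

section StrongOpening

variable {E : Finset (Finset V)} {u v z : V}

/-- `96 = 2 * 48`: the round pays for both of its moves. -/
def IsStrongOpening (E : Finset (Finset V)) (v : V) : Prop :=
  v ∈ playable E ∧ ∀ u ∈ playable (residual E v), weight (residual (residual E v) u) + 96 ≤ weight E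

lemma isStrongOpening_of_four_le_degree (hv : 4 ≤ degree E v) : IsStrongOpening E v := by
  refine ⟨mem_playable_iff.mpr (by omega), fun u hu => ?_⟩
  have hfirst := weight_residual_add_le E v
  have hreply := weight_residual_add_le (residual E v) u
  have hu := mem_playable_iff.mp hu
  have : 75 ≤ 15 * degree E v + vertexWeight (degree E v) := by
    unfold vertexWeight; split_ifs <;> omega
  have : 26 ≤ 15 * degree (residual E v) u + vertexWeight (degree (residual E v) u) := by
    unfold vertexWeight; split_ifs <;> omega
  omega

lemma weight_residual_add_28_le (h3 : ∀ e ∈ E, #e = 3)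
    (hmax : ∀ x, degree E x ≤ 3) (hu : u ∈ playable E) : weight (residual E u) + 28 ≤ weight E := by
  have := weight_residual_add_le_of_degree_le_three h3 hmax (v := u) ∅ (by simp)
  have hu := mem_playable_iff.mp hu
  have : 28 ≤ 17 * degree E u + vertexWeight (degree E u) := by
    unfold vertexWeight; split_ifs <;> omega
  omega

lemma weight_residual_add_68_le (h3 : ∀ e ∈ E, #e = 3) (hmax : ∀ x, degree E x ≤ 3)
    (hv : degree E v = 3) (huv : u ≠ v) (hpos : 0 < codegree E u v)
    (hbonus : degree E u ≤ 2 ∨ 2 ≤ codegree E u v) : weight (residual E v) + 68 ≤ weight E := by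
  have := weight_residual_add_le_of_degree_le_three h3 hmax {u}
    (by simpa using ⟨huv, hpos, hbonus⟩)
  rw [hv, card_singleton, show vertexWeight 3 = 15 from rfl] at this
  omega

/-- A reply of degree `1` next to a vertex of degree at most `2` earns the bonus; otherwise its
edge consists of vertices of degree `3`, and one of them, or `z` itself, would have been an
opening worth `68`. -/
lemma weight_residual_residual_add_30_le (h3 : ∀ e ∈ E, #e = 3) (hmax : ∀ x, degree E x ≤ 3)
    (hz : degree E z = 3) (hno : ∀ x ∈ playable E, weight E < weight (residual E x) + 68)
    (hu : u ∈ playable (residual E z)) :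
    weight (residual (residual E z) u) + 30 ≤ weight (residual E z) := by
  have hreply (B : Finset V) := weight_residual_add_le_of_degree_le_three (uniform_residual h3 z)
    (fun x => (degree_residual_le E x z).trans (hmax x)) (v := u) B
  by_cases hu2 : 2 ≤ degree (residual E z) u
  · have := hreply ∅ (by simp)
    have : 48 ≤ 17 * degree (residual E z) u + vertexWeight (degree (residual E z) u) := by
      unfold vertexWeight; split_ifs <;> omega
    omega
  have hu1 : degree (residual E z) u = 1 := by have := mem_playable_iff.mp hu; omega
  obtain ⟨f, hf, huf⟩ : ∃ f ∈ residual E z, u ∈ f := by simpa [playable] using hu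
  by_cases hlow : ∃ x ∈ f, x ≠ u ∧ degree (residual E z) x ≤ 2
  · obtain ⟨x, hxf, hxu, hx⟩ := hlow
    have := hreply {x} (by simpa using ⟨hxu, codegree_pos hf hxf huf, Or.inl hx⟩)
    rw [hu1, card_singleton, show vertexWeight 1 = 11 from rfl] at this
    omega
  have hopening (x : V) (hx : degree E x = 3) (hux : u ≠ x) (hpos : 0 < codegree E u x)
      (hbonus : degree E u ≤ 2 ∨ 2 ≤ codegree E u x) : False :=
    (hno x (mem_playable_iff.mpr (by omega))).not_ge
      (weight_residual_add_68_le h3 hmax hx hux hpos hbonus)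
  exfalso
  simp only [not_exists, not_and, not_le] at hlow
  obtain ⟨x, hxf, hxu⟩ := exists_mem_ne (by rw [uniform_residual h3 z f hf]; omega) u
  have hfE : f ∈ E := residual_subset E z hf
  have hx3 : degree E x = 3 :=
    le_antisymm (hmax x) ((hlow x hxf hxu).trans_le (degree_residual_le E x z))
  have huz : u ≠ z := by
    rintro rfl
    rw [degree_residual_self] at hu1
    omega
  have hcodeg := degree_residual_add_codegree E u z
  rcases le_or_gt (degree E u) 2 with hu2E | hu3E
  · exact hopening x hx3 hxu.symm (codegree_pos hfE huf hxf) (Or.inl hu2E)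
  · have := hmax u
    exact hopening z hz huz (by omega) (Or.inr (by omega))

lemma exists_isStrongOpening (h3 : ∀ e ∈ E, #e = 3) (hz : 3 ≤ degree E z) :
    ∃ v, IsStrongOpening E v := by
  by_cases h4 : ∃ v, 4 ≤ degree E v
  · obtain ⟨v, hv⟩ := h4
    exact ⟨v, isStrongOpening_of_four_le_degree hv⟩
  have hmax (x : V) : degree E x ≤ 3 := by
    by_contra hx
    exact h4 ⟨x, by omega⟩
  by_cases hgood : ∃ x ∈ playable E, weight (residual E x) + 68 ≤ weight E
  · obtain ⟨x, hx, hdrop⟩ := hgood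
    refine ⟨x, hx, fun u hu => ?_⟩
    have := weight_residual_add_28_le (uniform_residual h3 x)
      (fun y => (degree_residual_le E y x).trans (hmax y)) hu
    omega
  · simp only [not_exists, not_and, not_le] at hgood
    have hz3 : degree E z = 3 := le_antisymm (hmax z) hz
    refine ⟨z, mem_playable_iff.mpr (by omega), fun u hu => ?_⟩
    have := weight_residual_residual_add_30_le h3 hmax hz3 hgood hu
    have := weight_residual_add_le_of_degree_le_three h3 hmax (v := z) ∅ (by simp)
    rw [hz3, show vertexWeight 3 = 15 from rfl] at this
    omega

end StrongOpening

section LowDegree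

variable {E : Finset (Finset V)}

lemma numDegreeTwo_le_residual_add (E : Finset (Finset V)) (u : V) :
    numDegreeTwo E ≤ numDegreeTwo (residual E u) + #{x ∈ closedNbhd E u | degree E x = 2} := by
  refine (card_le_card fun x hx => ?_).trans (card_union_le _ _)
  simp only [mem_filter, mem_univ, true_and, mem_union] at hx ⊢
  by_cases hxN : x ∈ closedNbhd E u
  · exact Or.inr ⟨hxN, hx⟩
  · have := degree_residual_add_codegree E x u
    rw [codegree_eq_zero_of_notMem_closedNbhd hxN] at this
    omega

lemma three_dvd_numDegreeTwo (h3 : ∀ e ∈ E, #e = 3)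
    (h : ∀ x, degree E x = 2 → ∀ y ∈ closedNbhd E x, degree E y = 2) : 3 ∣ numDegreeTwo E := by
  have hdc := sum_degree_eq_sum_card_inter E {x | degree E x = 2}
  rw [sum_congr rfl fun x hx => (mem_filter.mp hx).2, sum_const, smul_eq_mul] at hdc
  have hedge (e) (he : e ∈ E) : 3 ∣ #(({x | degree E x = 2} : Finset V) ∩ e) := by
    by_cases hmeet : ∃ x ∈ e, degree E x = 2
    · obtain ⟨x, hxe, hx⟩ := hmeet
      rw [inter_eq_right.mpr fun y hy => by simpa using h x hx y (subset_closedNbhd he hxe hy),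
        h3 e he]
    · rw [card_eq_zero.mpr (eq_empty_iff_forall_notMem.mpr fun x hx => hmeet
        ⟨x, (mem_inter.mp hx).2, (mem_filter.mp (mem_inter.mp hx).1).2⟩)]
      exact dvd_zero 3
  obtain ⟨k, hk⟩ := dvd_sum hedge
  unfold numDegreeTwo
  omega

lemma six_mul_gameVal_false_add_le (h3 : ∀ e ∈ E, #e = 3) (hmax : ∀ x, degree E x ≤ 2)
    (hne : E.Nonempty)
    (ih : ∀ u ∈ playable E,
      6 * gameVal true (residual E u) + numDegreeTwo (residual E u) ≤ 6 * #(residual E u)) :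
    6 * gameVal false E + numDegreeTwo E ≤ 6 * #E + 2 := by
  obtain ⟨u, hu, hval⟩ := exists_gameVal_false_eq
    (playable_nonempty (fun e he => card_pos.mp (by rw [h3 e he]; omega)) hne)
  have hcard := card_residual_add_degree E u
  have hq := numDegreeTwo_le_residual_add E u
  have hdeg := mem_playable_iff.mp hu
  have := ih u hu
  have hw : #{x ∈ closedNbhd E u | degree E x = 2} + 4 ≤ 6 * degree E u := by
    rcases (by have := hmax u; omega : degree E u = 1 ∨ degree E u = 2) with hu1 | hu2
    · have := card_filter_closedNbhd_le_of_degree_eq_one h3 hu1 (degree E · = 2) (by omega)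
      omega
    · have := (card_filter_le (closedNbhd E u) (degree E · = 2)).trans_lt
        (card_closedNbhd_le_of_degree_eq_two h3 hu2)
      omega
  omega

/-- Edge-hitter plays a vertex of degree `2`. This falls short only if every vertex of degree `2`
shares edges with five vertices of degree `2`; then the vertices of degree `2` fill whole edges,
so `3 ∣ n₂`, which absorbs the rounding. -/
lemma six_mul_gameVal_true_add_le (h3 : ∀ e ∈ E, #e = 3) (hne : E.Nonempty)
    (ih : ∀ v ∈ playable E,
      6 * gameVal false (residual E v) + numDegreeTwo (residual E v) ≤ 6 * #(residual E v) + 2) :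
    6 * gameVal true E + numDegreeTwo E ≤ 6 * #E := by
  by_cases hq : numDegreeTwo E = 0
  · obtain ⟨v, hv⟩ := playable_nonempty (fun e he => card_pos.mp (by rw [h3 e he]; omega)) hne
    have := gameVal_true_le hv
    have := ih v hv
    have := card_residual_add_degree E v
    have := mem_playable_iff.mp hv
    omega
  obtain ⟨v, hv2, hw⟩ : ∃ v, degree E v = 2 ∧
      (3 ∣ numDegreeTwo E ∨ #{x ∈ closedNbhd E v | degree E x = 2} ≤ 4) := by
    obtain ⟨v, hv⟩ := card_ne_zero.mp hq
    by_contra! h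
    refine (h v (mem_filter.mp hv).2).1 (three_dvd_numDegreeTwo h3 fun x hx y hy => ?_)
    have hN := card_closedNbhd_le_of_degree_eq_two h3 hx
    have hfull : {y ∈ closedNbhd E x | degree E y = 2} = closedNbhd E x :=
      eq_of_subset_of_card_le (filter_subset _ _) (by have := (h x hx).2; omega)
    rw [← hfull] at hy
    exact (mem_filter.mp hy).2
  have hv : v ∈ playable E := mem_playable_iff.mpr (by omega)
  have := gameVal_true_le hv
  have := ih v hv
  have := card_residual_add_degree E v
  have := numDegreeTwo_le_residual_add E v
  have := (card_filter_le (closedNbhd E v) (degree E · = 2)).trans_lt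
    (card_closedNbhd_le_of_degree_eq_two h3 hv2)
  rcases hw with ⟨k, hk⟩ | hw <;> omega

end LowDegree

/-- Equivalently `τ_g ≤ m - ⌈n₂ / 6⌉` and `τ_g' ≤ m - ⌈(n₂ - 2) / 6⌉`. -/
theorem gameVal_bound_of_degree_le_two {E : Finset (Finset V)} (h3 : ∀ e ∈ E, #e = 3)
    (hmax : ∀ x, degree E x ≤ 2) :
    6 * gameVal true E + numDegreeTwo E ≤ 6 * #E ∧
      6 * gameVal false E + numDegreeTwo E ≤ 6 * #E + 2 := by
  induction E using Finset.strongInduction with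
  | H E ih =>
  rcases E.eq_empty_or_nonempty with rfl | hne
  · simp [gameVal_eq_zero, playable, numDegreeTwo, degree]
  have ih' (u : V) (hu : u ∈ playable E) := ih _ (residual_ssubset hu) (uniform_residual h3 u)
    fun x => (degree_residual_le E x u).trans (hmax x)
  exact ⟨six_mul_gameVal_true_add_le h3 hne fun v hv => (ih' v hv).2,
    six_mul_gameVal_false_add_le h3 hmax hne fun u hu => (ih' u hu).1⟩

lemma mul_card_le_weight_add_of_degree_le_two {E : Finset (Finset V)} (h3 : ∀ e ∈ E, #e = 3)
    (hmax : ∀ x, degree E x ≤ 2) : 48 * #E ≤ weight E + 8 * numDegreeTwo E := by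
  have hpt (x : V) : 11 * degree E x ≤ vertexWeight (degree E x) + if degree E x = 2 then 8 else 0 := by
    have := hmax x
    unfold vertexWeight
    split_ifs <;> omega
  have hsum := sum_le_sum fun x (_ : x ∈ univ) => hpt x
  rw [sum_add_distrib, ← mul_sum, sum_degree_of_uniform h3, sum_ite_eq_mul_card] at hsum
  unfold weight numDegreeTwo
  omega

theorem mul_gameVal_true_le_weight {E : Finset (Finset V)} (h3 : ∀ e ∈ E, #e = 3) :
    48 * gameVal true E ≤ weight E := by
  induction E using Finset.strongInduction with
  | H E ih =>
  by_cases hlow : ∀ x, degree E x ≤ 2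
  · have := (gameVal_bound_of_degree_le_two h3 hlow).1
    have := mul_card_le_weight_add_of_degree_le_two h3 hlow
    omega
  obtain ⟨z, hz⟩ : ∃ z, 2 < degree E z := by simpa using hlow
  obtain ⟨v, hv, hdrop⟩ := exists_isStrongOpening h3 hz
  refine mul_gameVal_true_le_of_forall_reply hv ?_ fun u hu => ?_
  · have := weight_residual_add_le E z
    have : 15 ≤ vertexWeight (degree E z) := vertexWeight_mono hz
    omega
  · have := hdrop u hu
    have := ih _ ((residual_subset _ u).trans_ssubset (residual_ssubset hv))
      (uniform_residual (uniform_residual h3 v) u)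
    omega

end TransversalGame

/-- If `H` is a `3`-uniform hypergraph, then
`48 τ_g(H) ≤ 15 n_{≥3}(H) + 14 n_2(H) + 11 n_1(H) + 15 m(H)`,
where `n_{≥3}(H)`, `n_2(H)`, `n_1(H)` are the numbers of vertices of degree at
least `3`, exactly `2`, and exactly `1`, respectively. -/
theorem gameTransversalNum_weighted_bound_of_three_uniform
    {V : Type} [Fintype V] [DecidableEq V] (E : Finset (Finset V))
    (h3 : ∀ e ∈ E, e.card = 3) :
    48 * gameTransversalNum E ≤
        15 * (Finset.univ.filter (fun v : V => 3 ≤ (E.filter (fun e => v ∈ e)).card)).card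
      + 14 * (Finset.univ.filter (fun v : V => (E.filter (fun e => v ∈ e)).card = 2)).card
      + 11 * (Finset.univ.filter (fun v : V => (E.filter (fun e => v ∈ e)).card = 1)).card
      + 15 * E.card := by
  have := TransversalGame.mul_gameVal_true_le_weight h3
  rwa [TransversalGame.weight_eq] at this
end
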